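/- arXiv:1008.4598 — 3 statements merged into one kernel-verified Lean document; each statement's English description precedes it below -/
import Mathlib

section
/- Let ℓ₁, ℓ₂, ℓ₃ be three lines in the real plane, pairwise non-parallel and not all passing through one point. Then the complement of ℓ₁ ∪ ℓ₂ ∪ ℓ₃ has exactly 7 connected components, exactly one of which is bounded, and that bounded component is the interior of the triangle with vertices the three pairwise intersection points. -/
/-!
Let `v₁₂, v₁₃, v₂₃` be the pairwise intersection points. Since no point lies on all three
lines, each vertex lies off the opposite line, so the vertices form an affine basis of the plane
and each line is the zero set of one barycentric coordinate. Off the lines, the sign pattern of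
the barycentric coordinates is locally constant and each sign class is convex, so the cells are
exactly the nonempty sign classes: all `2 ^ 3` patterns except the all-negative one, as the
coordinates sum to `1`. A cell with both a positive and a negative coordinate contains a ray, so
only the all-positive cell, the open triangle, is bounded.
-/

open Set

/-- A line in the real plane `ℝ × ℝ`, given by the equation `a*x + b*y = c`
with `(a, b) ≠ (0, 0)`. -/
structure Line2 where
  a : ℝ
  b : ℝ
  c : ℝ
  nondeg : (a, b) ≠ (0, 0)

/-- The set of points of a line. -/
def Line2.carrier (ℓ : Line2) : Set (ℝ × ℝ) :=
  {p | ℓ.a * p.1 + ℓ.b * p.2 = ℓ.c}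

/-- Two lines are parallel if their normal vectors are proportional
(this includes the case of equal lines). -/
def Line2.Parallel (ℓ₁ ℓ₂ : Line2) : Prop :=
  ℓ₁.a * ℓ₂.b = ℓ₂.a * ℓ₁.b

/-- A simple arrangement: a finite set of lines, pairwise non-parallel,
no point on three (or more) of the lines. -/
def IsSimpleArrangement (L : Finset Line2) : Prop :=
  (∀ ℓ₁ ∈ L, ∀ ℓ₂ ∈ L, ℓ₁ ≠ ℓ₂ → ¬ Line2.Parallel ℓ₁ ℓ₂) ∧
  (∀ ℓ₁ ∈ L, ∀ ℓ₂ ∈ L, ∀ ℓ₃ ∈ L, ℓ₁ ≠ ℓ₂ → ℓ₁ ≠ ℓ₃ → ℓ₂ ≠ ℓ₃ →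
    ∀ p : ℝ × ℝ, ¬(p ∈ ℓ₁.carrier ∧ p ∈ ℓ₂.carrier ∧ p ∈ ℓ₃.carrier))

/-- The union of the lines of an arrangement. -/
def linesUnion (L : Finset Line2) : Set (ℝ × ℝ) := ⋃ ℓ ∈ L, ℓ.carrier

/-- A cell of the arrangement determined by a closed set `S` of "forbidden" points:
a connected component of the complement of `S`. -/
def IsCellOf (S : Set (ℝ × ℝ)) (C : Set (ℝ × ℝ)) : Prop :=
  ∃ x, x ∉ S ∧ C = connectedComponentIn Sᶜ x

/-- A cell of a line arrangement: a connected component of the complement of the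
union of the lines. -/
def IsCell (L : Finset Line2) (C : Set (ℝ × ℝ)) : Prop :=
  IsCellOf (linesUnion L) C

/-- A set is a (closed, nondegenerate) triangle. -/
def IsTriangleSet (T : Set (ℝ × ℝ)) : Prop :=
  ∃ u v w : ℝ × ℝ, ¬ Collinear ℝ ({u, v, w} : Set (ℝ × ℝ)) ∧
    T = convexHull ℝ ({u, v, w} : Set (ℝ × ℝ))

/-- An edge of (the closure of) a polygonal region `P`: a maximal nondegenerate
segment contained in the frontier of `P`. -/
def IsEdge (P : Set (ℝ × ℝ)) (e : Set (ℝ × ℝ)) : Prop :=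
  ∃ x y : ℝ × ℝ, x ≠ y ∧ e = segment ℝ x y ∧ e ⊆ frontier P ∧
    ∀ x' y' : ℝ × ℝ, e ⊆ segment ℝ x' y' → segment ℝ x' y' ⊆ frontier P →
      segment ℝ x' y' = e

open Bornology

section Affine

variable {k V P ι : Type*} [AddCommGroup V] [AddTorsor V P]

lemma affineIndependent_of_apply_eq_zero_iff [Field k] [Module k V] [Fintype ι] {p : ι → P}
    (f : ι → P →ᵃ[k] k) (hf : ∀ i j, f i (p j) = 0 ↔ i ≠ j) : AffineIndependent k p := by
  rw [affineIndependent_iff_eq_of_fintype_affineCombination_eq]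
  intro w₁ w₂ hw₁ hw₂ h
  funext i
  have hfi := congrArg (f i) h
  rw [Finset.univ.map_affineCombination _ _ hw₁, Finset.univ.map_affineCombination _ _ hw₂,
    Finset.affineCombination_eq_linear_combination _ _ _ hw₁,
    Finset.affineCombination_eq_linear_combination _ _ _ hw₂,
    Finset.sum_eq_single i (fun j _ hj => by simp [(hf i j).2 (Ne.symm hj)]) (by simp),
    Finset.sum_eq_single i (fun j _ hj => by simp [(hf i j).2 (Ne.symm hj)]) (by simp)] at hfi
  exact mul_right_cancel₀ (by simpa using hf i i) hfi

namespace AffineBasis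

def facetHyperplanes [Ring k] [Module k V] (b : AffineBasis ι k P) : Set P :=
  {x | ∃ i, b.coord i x = 0}

lemma apply_eq_coord_mul [Ring k] [Module k V] [Fintype ι] (b : AffineBasis ι k P)
    (f : P →ᵃ[k] k) {i : ι} (hf : ∀ j ≠ i, f (b j) = 0) (x : P) :
    f x = b.coord i x * f (b i) := by
  conv_lhs => rw [← b.affineCombination_coord_eq_self x]
  rw [Finset.univ.map_affineCombination _ _ (b.sum_coord_apply_eq_one x),
    Finset.affineCombination_eq_linear_combination _ _ _ (b.sum_coord_apply_eq_one x),
    Finset.sum_eq_single i (fun j _ hj => by simp [hf j hj]) (by simp)]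
  rfl

lemma setOf_exists_apply_eq_zero [Field k] [Module k V] [Fintype ι] (b : AffineBasis ι k P)
    {f : ι → P →ᵃ[k] k} (hf : ∀ i j, f i (b j) = 0 ↔ i ≠ j) :
    {x | ∃ i, f i x = 0} = b.facetHyperplanes := by
  ext x
  simp only [facetHyperplanes, mem_ofPred_eq]
  refine exists_congr fun i => ?_
  rw [b.apply_eq_coord_mul (f i) (fun j hj => (hf i j).2 hj.symm) x,
    mul_eq_zero, or_iff_left (by simpa using hf i i)]

end AffineBasis

end Affine

namespace AffineBasis

variable {ι E : Type*} [NormedAddCommGroup E] [NormedSpace ℝ E] (b : AffineBasis ι ℝ E)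

def signCell (ε : ι → Bool) : Set E :=
  ⋂ i, b.coord i ⁻¹' if ε i then Ioi 0 else Iio 0

noncomputable def signPattern (x : E) (i : ι) : Bool :=
  decide (0 < b.coord i x)

variable {b}

lemma mem_signCell {ε : ι → Bool} {x : E} :
    x ∈ b.signCell ε ↔ ∀ i, if ε i then 0 < b.coord i x else b.coord i x < 0 := by
  simp only [signCell, mem_iInter, mem_preimage]
  exact forall_congr' fun i => by cases ε i <;> simp

lemma signPattern_eq_of_mem_signCell {ε : ι → Bool} {x : E} (hx : x ∈ b.signCell ε) :
    b.signPattern x = ε := by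
  funext i
  have hi := mem_signCell.1 hx i
  cases h : ε i <;> simp only [h, Bool.false_eq_true, if_false, if_true] at hi <;>
    simp [signPattern, hi, hi.le.not_gt]

lemma disjoint_signCell {ε ε' : ι → Bool} (h : ε ≠ ε') :
    Disjoint (b.signCell ε) (b.signCell ε') :=
  disjoint_left.2 fun _ hx hx' =>
    h ((signPattern_eq_of_mem_signCell hx).symm.trans (signPattern_eq_of_mem_signCell hx'))

lemma mem_signCell_signPattern {x : E} (hx : x ∉ b.facetHyperplanes) :
    x ∈ b.signCell (b.signPattern x) := by
  refine mem_signCell.2 fun i => ?_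
  have hne : b.coord i x ≠ 0 := fun h => hx ⟨i, h⟩
  by_cases h : 0 < b.coord i x
  · simp [signPattern, h]
  · simpa [signPattern, h] using lt_of_le_of_ne (not_lt.1 h) hne

lemma signCell_subset_compl_facetHyperplanes (ε : ι → Bool) :
    b.signCell ε ⊆ b.facetHyperplanesᶜ := by
  rintro x hx ⟨i, hi⟩
  have := mem_signCell.1 hx i
  cases ε i <;> simp_all

lemma convex_signCell (ε : ι → Bool) : Convex ℝ (b.signCell ε) :=
  convex_iInter fun i => Convex.affine_preimage (b.coord i) (by
    cases ε i
    exacts [convex_Iio 0, convex_Ioi 0])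

lemma isOpen_signCell [Finite ι] (ε : ι → Bool) : IsOpen (b.signCell ε) := by
  have := b.finiteDimensional
  refine isOpen_iInter_of_finite fun i => ?_
  refine (b.coord i).continuous_of_finiteDimensional.isOpen_preimage _ ?_
  cases ε i
  exacts [isOpen_Iio, isOpen_Ioi]

lemma connectedComponentIn_eq_signCell [Finite ι] {ε : ι → Bool} {x : E}
    (hx : x ∈ b.signCell ε) : connectedComponentIn b.facetHyperplanesᶜ x = b.signCell ε := by
  have hsub := signCell_subset_compl_facetHyperplanes (b := b)
  refine Subset.antisymm ?_
    ((convex_signCell ε).isPreconnected.subset_connectedComponentIn hx (hsub ε))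
  refine isPreconnected_connectedComponentIn.subset_left_of_subset_union (isOpen_signCell ε)
    (isOpen_biUnion fun ε' (_ : ε' ≠ ε) => isOpen_signCell ε')
    (disjoint_iUnion₂_right.2 fun ε' hε' => disjoint_signCell (Ne.symm hε'))
    (fun y hy => ?_) ⟨x, mem_connectedComponentIn (hsub ε hx), hx⟩
  have hy' := mem_signCell_signPattern (connectedComponentIn_subset _ _ hy)
  by_cases h : b.signPattern y = ε
  · exact Or.inl (h ▸ hy')
  · exact Or.inr (mem_iUnion₂.2 ⟨_, h, hy'⟩)

variable (b) in
lemma coord_add_smul_sub [DecidableEq ι] (x : E) (t : ℝ) (i j k : ι) :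
    b.coord k (x + t • (b i - b j)) =
      b.coord k x + t * ((if k = i then 1 else 0) - if k = j then 1 else 0) := by
  rw [← vsub_eq_sub, add_comm, ← vadd_eq_add, AffineMap.map_vadd, map_smul,
    AffineMap.linearMap_vsub, b.coord_apply, b.coord_apply]
  simp only [vsub_eq_sub, vadd_eq_add, smul_eq_mul]
  ring

variable [Fintype ι]

variable (b) in
lemma exists_coord_eq {w : ι → ℝ} (hw : ∑ i, w i = 1) :
    ∃ x, ∀ i, b.coord i x = w i :=
  ⟨_, fun i => b.coord_apply_combination_of_mem (Finset.mem_univ i) hw⟩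

variable (b) in
lemma signCell_nonempty_iff {ε : ι → Bool} : (b.signCell ε).Nonempty ↔ ∃ i, ε i = true := by
  classical
  constructor
  · rintro ⟨x, hx⟩
    by_contra! hε
    have hneg : ∀ i, b.coord i x < 0 := fun i => by
      simpa [hε i] using mem_signCell.1 hx i
    have := b.nonempty
    linarith [Finset.sum_neg (fun i _ => hneg i) Finset.univ_nonempty, b.sum_coord_apply_eq_one x]
  · rintro ⟨i₀, hi₀⟩
    set T := Finset.univ.filter fun i => ε i = true
    set F := Finset.univ.filter fun i => ¬ ε i = true
    have hT : (T.card : ℝ) ≠ 0 := Nat.cast_ne_zero.2 (Finset.card_ne_zero.2 ⟨i₀, by simp [T, hi₀]⟩)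
    -- positive weights share `1 + #F` so as to balance the weight `-1` at each negative index
    set w : ι → ℝ := fun i => if ε i then (1 + F.card) / T.card else -1
    have hw : ∑ i, w i = 1 := by
      simp only [w, Finset.sum_ite, Finset.sum_const, nsmul_eq_mul]
      field_simp
      ring
    obtain ⟨x, hx⟩ := exists_coord_eq b hw
    refine ⟨x, mem_signCell.2 fun i => ?_⟩
    rw [hx i]
    cases h : ε i <;> simp [w, h]
    positivity

lemma not_isBounded_signCell {ε : ι → Bool} {i j : ι} (hi : ε i = true) (hj : ε j = false) :
    ¬ IsBounded (b.signCell ε) := by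
  classical
  have := b.finiteDimensional
  have hij : i ≠ j := by rintro rfl; simp_all
  obtain ⟨x, hx⟩ := b.signCell_nonempty_iff.2 ⟨i, hi⟩
  -- moving from `x` towards `b i` and away from `b j` keeps every sign
  have hray : ∀ t : ℝ, 0 ≤ t → x + t • (b i - b j) ∈ b.signCell ε := fun t ht =>
    mem_signCell.2 fun k => by
      have hk := mem_signCell.1 hx k
      rw [coord_add_smul_sub]
      rcases eq_or_ne k i with rfl | hki
      · simp only [hi, if_true, if_neg hij] at hk ⊢
        linarith
      rcases eq_or_ne k j with rfl | hkj
      · simp only [hj, if_false, if_true, if_neg hki, Bool.false_eq_true] at hk ⊢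
        linarith
      simpa [hki, hkj] using hk
  intro hB
  obtain ⟨M, hM⟩ := (hB.isCompact_closure.bddAbove_image
    (b.coord i).continuous_of_finiteDimensional.continuousOn).mono (image_mono subset_closure)
  set t := max (M - b.coord i x + 1) 0
  have := hM ⟨_, hray t (le_max_right _ _), rfl⟩
  rw [coord_add_smul_sub] at this
  simp only [if_true, hij, if_false] at this
  linarith [le_max_left (M - b.coord i x + 1) 0]

variable (b) in
lemma signCell_true_eq_interior_convexHull :
    b.signCell (fun _ => true) = interior (convexHull ℝ (range b)) := by
  ext x
  simp [b.interior_convexHull, mem_signCell]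

theorem image_connectedComponentIn_compl_facetHyperplanes :
    connectedComponentIn b.facetHyperplanesᶜ '' b.facetHyperplanesᶜ =
      b.signCell '' {ε | ∃ i, ε i = true} := by
  ext C
  constructor
  · rintro ⟨x, hx, rfl⟩
    have hx' := mem_signCell_signPattern hx
    exact ⟨_, b.signCell_nonempty_iff.1 ⟨x, hx'⟩, (connectedComponentIn_eq_signCell hx').symm⟩
  · rintro ⟨ε, hε, rfl⟩
    obtain ⟨x, hx⟩ := b.signCell_nonempty_iff.2 hε
    exact ⟨x, signCell_subset_compl_facetHyperplanes ε hx, connectedComponentIn_eq_signCell hx⟩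

theorem ncard_image_connectedComponentIn_compl_facetHyperplanes :
    (connectedComponentIn b.facetHyperplanesᶜ '' b.facetHyperplanesᶜ).ncard =
      2 ^ Fintype.card ι - 1 := by
  classical
  have hinj : InjOn b.signCell {ε | ∃ i, ε i = true} := fun ε hε ε' _ h => by
    obtain ⟨x, hx⟩ := b.signCell_nonempty_iff.2 hε
    exact (signPattern_eq_of_mem_signCell hx).symm.trans
      (signPattern_eq_of_mem_signCell (h ▸ hx))
  have hpos : {ε : ι → Bool | ∃ i, ε i = true} = univ \ {fun _ => false} := by
    ext ε
    simp [funext_iff]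
  rw [image_connectedComponentIn_compl_facetHyperplanes, hinj.ncard_image, hpos,
    ncard_sdiff_singleton_of_mem (mem_univ _), ncard_univ, Nat.card_eq_fintype_card]
  simp

theorem mem_image_connectedComponentIn_compl_facetHyperplanes_and_isBounded_iff {C : Set E} :
    C ∈ connectedComponentIn b.facetHyperplanesᶜ '' b.facetHyperplanesᶜ ∧ IsBounded C ↔
      C = interior (convexHull ℝ (range b)) := by
  rw [← signCell_true_eq_interior_convexHull, image_connectedComponentIn_compl_facetHyperplanes]
  constructor
  · rintro ⟨⟨ε, ⟨i, hi⟩, rfl⟩, hB⟩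
    congr
    funext j
    by_contra hj
    exact not_isBounded_signCell hi (eq_false_of_ne_true hj) hB
  · rintro rfl
    obtain ⟨i⟩ := b.nonempty
    refine ⟨⟨_, ⟨i, rfl⟩, rfl⟩, ?_⟩
    rw [signCell_true_eq_interior_convexHull]
    exact (isBounded_convexHull.2 (finite_range b).isBounded).subset interior_subset

end AffineBasis

namespace Line2

def equation (ℓ : Line2) : ℝ × ℝ →ᵃ[ℝ] ℝ where
  toFun p := ℓ.a * p.1 + ℓ.b * p.2 - ℓ.c
  linear := ℓ.a • LinearMap.fst ℝ ℝ ℝ + ℓ.b • LinearMap.snd ℝ ℝ ℝ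
  map_vadd' p v := by
    simp only [vadd_eq_add, Prod.fst_add, Prod.snd_add, LinearMap.add_apply,
      LinearMap.smul_apply, LinearMap.fst_apply, LinearMap.snd_apply, smul_eq_mul]
    ring

lemma mem_carrier_iff_equation_eq_zero {ℓ : Line2} {p : ℝ × ℝ} :
    p ∈ ℓ.carrier ↔ ℓ.equation p = 0 := by
  simp [carrier, equation, sub_eq_zero]

lemma inter_nonempty_of_not_parallel {ℓ m : Line2} (h : ¬ ℓ.Parallel m) :
    (ℓ.carrier ∩ m.carrier).Nonempty := by
  have hD : ℓ.a * m.b - m.a * ℓ.b ≠ 0 := sub_ne_zero.2 h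
  refine ⟨((ℓ.c * m.b - m.c * ℓ.b) / (ℓ.a * m.b - m.a * ℓ.b),
    (ℓ.a * m.c - m.a * ℓ.c) / (ℓ.a * m.b - m.a * ℓ.b)), ?_, ?_⟩ <;>
  · rw [carrier, mem_ofPred_eq, mul_div_assoc', mul_div_assoc', ← add_div, div_eq_iff hD]
    ring

theorem exists_affineBasis_facetHyperplanes_eq {ℓ₁ ℓ₂ ℓ₃ : Line2}
    (hconc : ¬ ∃ p : ℝ × ℝ, p ∈ ℓ₁.carrier ∧ p ∈ ℓ₂.carrier ∧ p ∈ ℓ₃.carrier)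
    {v₁₂ v₁₃ v₂₃ : ℝ × ℝ} (h₁₂ : v₁₂ ∈ ℓ₁.carrier ∩ ℓ₂.carrier)
    (h₁₃ : v₁₃ ∈ ℓ₁.carrier ∩ ℓ₃.carrier) (h₂₃ : v₂₃ ∈ ℓ₂.carrier ∩ ℓ₃.carrier) :
    ∃ b : AffineBasis (Fin 3) ℝ (ℝ × ℝ), range b = {v₁₂, v₁₃, v₂₃} ∧
      b.facetHyperplanes = ℓ₁.carrier ∪ ℓ₂.carrier ∪ ℓ₃.carrier := by
  set p : Fin 3 → ℝ × ℝ := ![v₁₂, v₁₃, v₂₃]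
  set f : Fin 3 → ℝ × ℝ →ᵃ[ℝ] ℝ := ![ℓ₃.equation, ℓ₂.equation, ℓ₁.equation]
  have n₁₂ : v₁₂ ∉ ℓ₃.carrier := fun h => hconc ⟨v₁₂, h₁₂.1, h₁₂.2, h⟩
  have n₁₃ : v₁₃ ∉ ℓ₂.carrier := fun h => hconc ⟨v₁₃, h₁₃.1, h, h₁₃.2⟩
  have n₂₃ : v₂₃ ∉ ℓ₁.carrier := fun h => hconc ⟨v₂₃, h, h₂₃.1, h₂₃.2⟩
  have hf : ∀ i j, f i (p j) = 0 ↔ i ≠ j := by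
    intro i j
    fin_cases i <;> fin_cases j <;>
      simp_all [f, p, ← mem_carrier_iff_equation_eq_zero]
  have hind := affineIndependent_of_apply_eq_zero_iff f hf
  let b : AffineBasis (Fin 3) ℝ (ℝ × ℝ) :=
    ⟨p, hind, by rw [hind.affineSpan_eq_top_iff_card_eq_finrank_add_one]; simp⟩
  refine ⟨b, ?_, ?_⟩
  · change range p = _
    simp only [p, Matrix.range_cons, Matrix.range_empty, union_empty, singleton_union]
  · rw [← b.setOf_exists_apply_eq_zero hf]
    ext x
    simp [f, Fin.exists_fin_succ, mem_carrier_iff_equation_eq_zero]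
    tauto

end Line2

lemma isCellOf_iff_mem_image_connectedComponentIn {S C : Set (ℝ × ℝ)} :
    IsCellOf S C ↔ C ∈ connectedComponentIn Sᶜ '' Sᶜ := by
  simp [IsCellOf, eq_comm]

/-- Three pairwise non-parallel lines with no common point split the plane into
exactly 7 cells, exactly one of which is bounded, and the bounded cell is the
interior of the triangle whose vertices are the three pairwise intersection
points. -/
theorem stmt5 (ℓ₁ ℓ₂ ℓ₃ : Line2)
    (h12 : ¬ Line2.Parallel ℓ₁ ℓ₂) (h13 : ¬ Line2.Parallel ℓ₁ ℓ₃)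
    (h23 : ¬ Line2.Parallel ℓ₂ ℓ₃)
    (hconc : ¬ ∃ p : ℝ × ℝ, p ∈ ℓ₁.carrier ∧ p ∈ ℓ₂.carrier ∧ p ∈ ℓ₃.carrier) :
    {C : Set (ℝ × ℝ) |
        IsCellOf (ℓ₁.carrier ∪ ℓ₂.carrier ∪ ℓ₃.carrier) C}.ncard = 7 ∧
    {C : Set (ℝ × ℝ) | IsCellOf (ℓ₁.carrier ∪ ℓ₂.carrier ∪ ℓ₃.carrier) C ∧
        Bornology.IsBounded C}.ncard = 1 ∧
    ∀ C : Set (ℝ × ℝ),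
      IsCellOf (ℓ₁.carrier ∪ ℓ₂.carrier ∪ ℓ₃.carrier) C →
      Bornology.IsBounded C →
      ∀ v₁₂ v₁₃ v₂₃ : ℝ × ℝ,
        v₁₂ ∈ ℓ₁.carrier ∩ ℓ₂.carrier →
        v₁₃ ∈ ℓ₁.carrier ∩ ℓ₃.carrier →
        v₂₃ ∈ ℓ₂.carrier ∩ ℓ₃.carrier →
        C = interior (convexHull ℝ ({v₁₂, v₁₃, v₂₃} : Set (ℝ × ℝ))) := by
  simp_rw [isCellOf_iff_mem_image_connectedComponentIn, ofPred_mem_eq]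
  obtain ⟨v₁₂, h₁₂⟩ := Line2.inter_nonempty_of_not_parallel h12
  obtain ⟨v₁₃, h₁₃⟩ := Line2.inter_nonempty_of_not_parallel h13
  obtain ⟨v₂₃, h₂₃⟩ := Line2.inter_nonempty_of_not_parallel h23
  obtain ⟨b, -, hS⟩ := Line2.exists_affineBasis_facetHyperplanes_eq hconc h₁₂ h₁₃ h₂₃
  refine ⟨?_, ?_, fun C hC hB w₁₂ w₁₃ w₂₃ g₁₂ g₁₃ g₂₃ => ?_⟩
  · rw [← hS, b.ncard_image_connectedComponentIn_compl_facetHyperplanes]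
    rfl
  · simp_rw [← hS, b.mem_image_connectedComponentIn_compl_facetHyperplanes_and_isBounded_iff]
    exact ncard_singleton _
  · obtain ⟨b', hb', hS'⟩ := Line2.exists_affineBasis_facetHyperplanes_eq hconc g₁₂ g₁₃ g₂₃
    rw [← hS'] at hC
    rw [← hb']
    exact b'.mem_image_connectedComponentIn_compl_facetHyperplanes_and_isBounded_iff.1 ⟨hC, hB⟩
end

section
/- In a simple arrangement of n ≥ 3 lines in the real plane, every line of the arrangement is an edge-supporting line of at least one triangular bounded cell; that is, for every line ℓ in the arrangement there exists a bounded cell of the arrangement whose closure is a triangle having one side contained in ℓ. -/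
/-!
Fix `ℓ` and, among the intersection points of pairs of the other lines, pick one, `v = ℓ₁ ∩ ℓ₂`,
nearest to `ℓ` (i.e. minimising `|ℓ.eval v|`). Together with `x = ℓ ∩ ℓ₁` and `y = ℓ ∩ ℓ₂` it
spans a triangle whose interior no line meets: a fourth line through the open triangle would
separate `v` from `x` or from `y`, hence cross the side `vx` or `vy` at a vertex of the
arrangement strictly nearer to `ℓ` than `v`. An open triangle whose sides lie on lines of the
arrangement and that misses all of them is a cell, and its side `xy` lies on `ℓ`.
-/

open Set

section AffineFunctional

variable {k V P ι : Type*} [Field k] [AddCommGroup V] [Module k V] [AddTorsor V P] [Fintype ι]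

theorem AffineBasis.apply_eq_sum_coord_mul (b : AffineBasis ι k P) (f : P →ᵃ[k] k)
    (p : P) : f p = ∑ i, b.coord i p * f (b i) := by
  conv_lhs => rw [← b.affineCombination_coord_eq_self p]
  rw [Finset.map_affineCombination _ _ _ (b.sum_coord_apply_eq_one p),
    Finset.univ.affineCombination_eq_linear_combination _ _ (b.sum_coord_apply_eq_one p)]
  simp only [Function.comp_apply, smul_eq_mul]

theorem AffineBasis.apply_eq_coord_mul_s7 (b : AffineBasis ι k P) (f : P →ᵃ[k] k)
    {i : ι} (hf : ∀ j ≠ i, f (b j) = 0) (p : P) : f p = b.coord i p * f (b i) := by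
  rw [b.apply_eq_sum_coord_mul f p, Finset.sum_eq_single i (fun j _ hj => by simp [hf j hj])
    (by simp)]

theorem AffineBasis.exists_apply_mul_apply_neg [LinearOrder k] [IsStrictOrderedRing k]
    (b : AffineBasis ι k P) (f : P →ᵃ[k] k) {p : P} (hp : ∀ i, 0 < b.coord i p) (hfp : f p = 0)
    {i : ι} (hi : f (b i) ≠ 0) : ∃ j, f (b i) * f (b j) < 0 := by
  by_contra! h
  have hsum : f (b i) * f p = ∑ j, b.coord j p * (f (b i) * f (b j)) := by
    rw [b.apply_eq_sum_coord_mul f p, Finset.mul_sum]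
    exact Finset.sum_congr rfl fun j _ => by ring
  have hterm : b.coord i p * (f (b i) * f (b i)) ≤ ∑ j, b.coord j p * (f (b i) * f (b j)) :=
    Finset.single_le_sum (f := fun j => b.coord j p * (f (b i) * f (b j)))
      (fun j _ => mul_nonneg (hp j).le (h j)) (Finset.mem_univ i)
  have hpos : 0 < b.coord i p * (f (b i) * f (b i)) := mul_pos (hp i) (mul_self_pos.mpr hi)
  rw [← hsum, hfp, mul_zero] at hterm
  exact hpos.not_ge hterm

end AffineFunctional

section OrderedField

variable {k E : Type*} [Field k] [LinearOrder k] [IsStrictOrderedRing k] [AddCommGroup E]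
  [Module k E]

theorem AffineMap.exists_mem_openSegment_apply_eq_zero (f : E →ᵃ[k] k) {a b : E}
    (h : f a * f b < 0) : ∃ q ∈ openSegment k a b, f q = 0 := by
  have hne : f a - f b ≠ 0 := fun h0 => by
    rw [sub_eq_zero.mp h0] at h
    exact (mul_self_nonneg (f b)).not_gt h
  refine ⟨AffineMap.lineMap a b (f a / (f a - f b)), ?_, ?_⟩
  · rw [openSegment_eq_image_lineMap]
    refine ⟨_, ?_, rfl⟩
    rcases lt_or_gt_of_ne hne with hd | hd
    · exact ⟨div_pos_of_neg_of_neg (by nlinarith) hd, (div_lt_one_of_neg hd).mpr (by nlinarith)⟩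
    · exact ⟨div_pos (by nlinarith) hd, (div_lt_one hd).mpr (by nlinarith)⟩
  · rw [AffineMap.apply_lineMap, AffineMap.lineMap_apply_ring']
    field_simp
    ring

theorem AffineMap.abs_apply_lt_of_mem_openSegment (f : E →ᵃ[k] k) {a b q : E}
    (hq : q ∈ openSegment k a b) (ha : f a ≠ 0) (hb : f b = 0) : |f q| < |f a| := by
  rw [openSegment_eq_image_lineMap] at hq
  obtain ⟨t, ⟨ht0, ht1⟩, rfl⟩ := hq
  rw [AffineMap.apply_lineMap, hb, AffineMap.lineMap_apply_ring',
    show t * (0 - f a) + f a = (1 - t) * f a by ring, abs_mul, abs_of_pos (by linarith : 0 < 1 - t)]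
  nlinarith [abs_pos.mpr ha]

end OrderedField

theorem AffineMap.not_collinear_of_apply_ne_zero {k V P : Type*} [Field k] [AddCommGroup V]
    [Module k V] [AddTorsor V P] (f : P →ᵃ[k] k) {v x y : P} (hxy : x ≠ y) (hx : f x = 0)
    (hy : f y = 0) (hv : f v ≠ 0) : ¬ Collinear k ({v, x, y} : Set P) := by
  intro hcol
  obtain ⟨r, hr⟩ := mem_affineSpan_pair_iff_exists_lineMap_eq.mp
    (hcol.mem_affineSpan_of_mem_of_ne (p₃ := v) (by simp) (by simp) (by simp) hxy)
  apply hv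
  rw [← hr, AffineMap.apply_lineMap, hx, hy, AffineMap.lineMap_same_apply]

theorem connectedComponentIn_compl_eq_of_frontier_subset {X : Type*} [TopologicalSpace X]
    {S U : Set X} (hU : IsOpen U) (hUc : IsPreconnected U) (hUS : Disjoint U S)
    (hfr : frontier U ⊆ S) {q : X} (hq : q ∈ U) : connectedComponentIn Sᶜ q = U := by
  refine Subset.antisymm ?_
    (hUc.subset_connectedComponentIn hq (subset_compl_iff_disjoint_right.mpr hUS))
  have hcover : Sᶜ ⊆ U ∪ (closure U)ᶜ := fun p hp => by
    by_contra h
    simp only [mem_union, mem_compl_iff, not_or, not_not] at h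
    exact hp (hfr ⟨h.2, hU.interior_eq.symm ▸ h.1⟩)
  exact isPreconnected_connectedComponentIn.subset_left_of_subset_union hU
    isClosed_closure.isOpen_compl (disjoint_compl_right.mono_right (compl_subset_compl.mpr
      subset_closure)) ((connectedComponentIn_subset _ _).trans hcover)
    ⟨q, mem_connectedComponentIn (hUS.notMem_of_mem_left hq), hq⟩

namespace Line2

variable {ℓ m n : Line2} {p : ℝ × ℝ}

def eval (ℓ : Line2) : (ℝ × ℝ) →ᵃ[ℝ] ℝ where
  toFun p := ℓ.a * p.1 + ℓ.b * p.2 - ℓ.c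
  linear := ℓ.a • LinearMap.fst ℝ ℝ ℝ + ℓ.b • LinearMap.snd ℝ ℝ ℝ
  map_vadd' p v := by
    simp only [vadd_eq_add, Prod.fst_add, Prod.snd_add, LinearMap.add_apply,
      LinearMap.smul_apply, LinearMap.fst_apply, LinearMap.snd_apply, smul_eq_mul]
    ring

theorem eval_apply (ℓ : Line2) (p : ℝ × ℝ) : ℓ.eval p = ℓ.a * p.1 + ℓ.b * p.2 - ℓ.c := rfl

theorem eval_eq_zero_iff : ℓ.eval p = 0 ↔ p ∈ ℓ.carrier := by
  rw [eval_apply, sub_eq_zero]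
  rfl

theorem carrier_eq_preimage (ℓ : Line2) : ℓ.carrier = ℓ.eval ⁻¹' {0} := by
  ext p
  exact eval_eq_zero_iff.symm

theorem convex_carrier (ℓ : Line2) : Convex ℝ ℓ.carrier := by
  rw [carrier_eq_preimage]
  exact (convex_singleton 0).affine_preimage ℓ.eval

theorem parallel_iff_det_eq_zero : m.Parallel n ↔ m.a * n.b - n.a * m.b = 0 :=
  sub_eq_zero.symm

/-- The intersection point of two lines, by Cramer's rule. -/
noncomputable def inter (m n : Line2) : ℝ × ℝ :=
  ((m.c * n.b - n.c * m.b) / (m.a * n.b - n.a * m.b),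
   (m.a * n.c - n.a * m.c) / (m.a * n.b - n.a * m.b))

theorem inter_mem_left (h : ¬ m.Parallel n) : m.inter n ∈ m.carrier := by
  rw [parallel_iff_det_eq_zero] at h
  show m.a * _ + m.b * _ = m.c
  simp only [inter]
  rw [mul_div_assoc', mul_div_assoc', ← add_div, div_eq_iff h]
  ring

theorem inter_mem_right (h : ¬ m.Parallel n) : m.inter n ∈ n.carrier := by
  rw [parallel_iff_det_eq_zero] at h
  show n.a * _ + n.b * _ = n.c
  simp only [inter]
  rw [mul_div_assoc', mul_div_assoc', ← add_div, div_eq_iff h]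
  ring

theorem eq_inter (h : ¬ m.Parallel n) (hm : p ∈ m.carrier) (hn : p ∈ n.carrier) :
    p = m.inter n := by
  have hq := inter_mem_left h
  have hq' := inter_mem_right h
  rw [parallel_iff_det_eq_zero] at h
  simp only [carrier, mem_ofPred_eq] at hm hn hq hq'
  ext
  · refine mul_right_cancel₀ h ?_
    linear_combination n.b * hm - m.b * hn - n.b * hq + m.b * hq'
  · refine mul_right_cancel₀ h ?_
    linear_combination m.a * hn - n.a * hm - m.a * hq' + n.a * hq

theorem exists_vertex_forall_le (E : Finset Line2)
    (hpar : ∀ m ∈ E, ∀ n ∈ E, m ≠ n → ¬ m.Parallel n) (hE : E.Nontrivial) (g : ℝ × ℝ → ℝ) :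
    ∃ ℓ₁ ∈ E, ∃ ℓ₂ ∈ E, ℓ₁ ≠ ℓ₂ ∧ ∃ v ∈ ℓ₁.carrier, v ∈ ℓ₂.carrier ∧
      ∀ n₁ ∈ E, ∀ n₂ ∈ E, n₁ ≠ n₂ → ∀ q ∈ n₁.carrier, q ∈ n₂.carrier → g v ≤ g q := by
  obtain ⟨m₁, hm₁, m₂, hm₂, hm₁₂⟩ := hE
  obtain ⟨⟨ℓ₁, ℓ₂⟩, hmem, hmin⟩ := E.offDiag.exists_min_image (fun e => g (e.1.inter e.2))
    ⟨(m₁, m₂), Finset.mem_offDiag.mpr ⟨hm₁, hm₂, hm₁₂⟩⟩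
  obtain ⟨h₁, h₂, h₁₂⟩ := Finset.mem_offDiag.mp hmem
  refine ⟨ℓ₁, h₁, ℓ₂, h₂, h₁₂, _, inter_mem_left (hpar _ h₁ _ h₂ h₁₂),
    inter_mem_right (hpar _ h₁ _ h₂ h₁₂), fun n₁ hn₁ n₂ hn₂ hne q hq₁ hq₂ => ?_⟩
  rw [eq_inter (hpar _ hn₁ _ hn₂ hne) hq₁ hq₂]
  exact hmin (n₁, n₂) (Finset.mem_offDiag.mpr ⟨hn₁, hn₂, hne⟩)

theorem exists_mem_carrier_abs_eval_lt {v x : ℝ × ℝ}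
    (hv : v ∈ n.carrier) (hx : x ∈ n.carrier) (hℓv : ℓ.eval v ≠ 0) (hℓx : ℓ.eval x = 0)
    (hm : m.eval v * m.eval x < 0) :
    ∃ q ∈ m.carrier, q ∈ n.carrier ∧ |ℓ.eval q| < |ℓ.eval v| := by
  obtain ⟨q, hq, hmq⟩ := m.eval.exists_mem_openSegment_apply_eq_zero hm
  exact ⟨q, eval_eq_zero_iff.mp hmq, n.convex_carrier.openSegment_subset hv hx hq,
    ℓ.eval.abs_apply_lt_of_mem_openSegment hq hℓv hℓx⟩

end Line2

theorem IsSimpleArrangement.eval_ne_zero {L : Finset Line2} (hL : IsSimpleArrangement L)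
    {ℓ₁ ℓ₂ ℓ₃ : Line2} (h₁ : ℓ₁ ∈ L) (h₂ : ℓ₂ ∈ L) (h₃ : ℓ₃ ∈ L) (h₁₂ : ℓ₁ ≠ ℓ₂)
    (h₁₃ : ℓ₁ ≠ ℓ₃) (h₂₃ : ℓ₂ ≠ ℓ₃) {p : ℝ × ℝ} (hp₁ : p ∈ ℓ₁.carrier) (hp₂ : p ∈ ℓ₂.carrier) :
    ℓ₃.eval p ≠ 0 := fun h =>
  hL.2 ℓ₁ h₁ ℓ₂ h₂ ℓ₃ h₃ h₁₂ h₁₃ h₂₃ p ⟨hp₁, hp₂, Line2.eval_eq_zero_iff.mp h⟩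

theorem IsSimpleArrangement.disjoint_interior_convexHull_linesUnion [DecidableEq Line2]
    {L : Finset Line2} (hL : IsSimpleArrangement L) {ℓ ℓ₁ ℓ₂ : Line2} (hℓ : ℓ ∈ L) (h₁ : ℓ₁ ∈ L.erase ℓ)
    (h₂ : ℓ₂ ∈ L.erase ℓ) (h₁₂ : ℓ₁ ≠ ℓ₂) (b : AffineBasis (Fin 3) ℝ (ℝ × ℝ))
    (hv₁ : b 0 ∈ ℓ₁.carrier) (hv₂ : b 0 ∈ ℓ₂.carrier) (hx : b 1 ∈ ℓ.carrier)
    (hx₁ : b 1 ∈ ℓ₁.carrier) (hy : b 2 ∈ ℓ.carrier) (hy₂ : b 2 ∈ ℓ₂.carrier)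
    (hmin : ∀ n₁ ∈ L.erase ℓ, ∀ n₂ ∈ L.erase ℓ, n₁ ≠ n₂ → ∀ q ∈ n₁.carrier, q ∈ n₂.carrier →
      |ℓ.eval (b 0)| ≤ |ℓ.eval q|) :
    Disjoint (interior (convexHull ℝ (range b))) (linesUnion L) := by
  obtain ⟨hℓ₁, hL₁⟩ := Finset.mem_erase.mp h₁
  obtain ⟨hℓ₂, hL₂⟩ := Finset.mem_erase.mp h₂
  have hℓv : ℓ.eval (b 0) ≠ 0 := hL.eval_ne_zero hL₁ hL₂ hℓ h₁₂ hℓ₁ hℓ₂ hv₁ hv₂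
  rw [b.interior_convexHull, Set.disjoint_left]
  intro p hp hpL
  simp only [linesUnion, mem_iUnion] at hpL
  obtain ⟨m, hm, hpm⟩ := hpL
  have hmp : m.eval p = 0 := Line2.eval_eq_zero_iff.mpr hpm
  have side : ∀ i, (∀ j ≠ i, b j ∈ m.carrier) → m.eval (b i) = 0 := fun i hj => by
    by_contra hi
    rw [b.apply_eq_coord_mul_s7 m.eval fun j hji => Line2.eval_eq_zero_iff.mpr (hj j hji)] at hmp
    exact mul_ne_zero (hp i).ne' hi hmp
  by_cases hmℓ : m = ℓ
  · subst hmℓ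
    exact hℓv (side 0 (by simp [Fin.forall_fin_succ, hx, hy]))
  by_cases hm₁ : m = ℓ₁
  · subst hm₁
    exact hL.eval_ne_zero hℓ hL₂ hm hℓ₂.symm hℓ₁.symm h₁₂.symm hy hy₂
      (side 2 (by simp [Fin.forall_fin_succ, hv₁, hx₁]))
  by_cases hm₂ : m = ℓ₂
  · subst hm₂
    exact hL.eval_ne_zero hℓ hL₁ hm hℓ₁.symm hℓ₂.symm h₁₂ hx hx₁
      (side 1 (by simp [Fin.forall_fin_succ, hv₂, hy₂]))
  have hmE : m ∈ L.erase ℓ := Finset.mem_erase.mpr ⟨hmℓ, hm⟩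
  have hmv : m.eval (b 0) ≠ 0 :=
    hL.eval_ne_zero hL₁ hL₂ hm h₁₂ (Ne.symm hm₁) (Ne.symm hm₂) hv₁ hv₂
  -- `m` separates `b 0` from `b 1` or `b 2`, so it meets `ℓ₁` or `ℓ₂` closer to `ℓ` than `b 0`
  have cross : ∀ n ∈ L.erase ℓ, m ≠ n → ∀ w ∈ n.carrier, w ∈ ℓ.carrier → b 0 ∈ n.carrier →
      ¬ m.eval (b 0) * m.eval w < 0 := fun n hn hmn w hw hwℓ hv hneg => by
    obtain ⟨q, hqm, hqn, hlt⟩ := Line2.exists_mem_carrier_abs_eval_lt hv hw hℓv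
      (Line2.eval_eq_zero_iff.mpr hwℓ) hneg
    exact (hmin m hmE n hn hmn q hqm hqn).not_gt hlt
  obtain ⟨j, hj⟩ := b.exists_apply_mul_apply_neg m.eval hp hmp hmv
  fin_cases j
  · exact (mul_self_nonneg _).not_gt hj
  · exact cross ℓ₁ h₁ hm₁ _ hx₁ hx hv₁ hj
  · exact cross ℓ₂ h₂ hm₂ _ hy₂ hy hv₂ hj

theorem AffineBasis.closure_interior_convexHull {ι E : Type*} [Fintype ι] [NormedAddCommGroup E]
    [NormedSpace ℝ E] (b : AffineBasis ι ℝ E) :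
    closure (interior (convexHull ℝ (range b))) = convexHull ℝ (range b) := by
  rw [(convex_convexHull ℝ _).closure_interior_eq_closure_of_nonempty_interior
    ⟨_, b.centroid_mem_interior_convexHull⟩, ((finite_range b).isClosed_convexHull ℝ).closure_eq]

theorem exists_affineBasis_of_not_collinear {k V P : Type*} [Field k] [AddCommGroup V]
    [Module k V] [AddTorsor V P] (hV : Module.finrank k V = 2) {p₀ p₁ p₂ : P}
    (h : ¬ Collinear k ({p₀, p₁, p₂} : Set P)) :
    ∃ b : AffineBasis (Fin 3) k P, ⇑b = ![p₀, p₁, p₂] := by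
  have : Module.Finite k V := Module.finite_of_finrank_eq_succ hV
  have hind := affineIndependent_iff_not_collinear_set.mpr h
  exact ⟨⟨_, hind, hind.affineSpan_eq_top_iff_card_eq_finrank_add_one.mpr (by simp [hV])⟩, rfl⟩

theorem isCell_interior_convexHull {ι : Type*} [Fintype ι] {L : Finset Line2}
    (b : AffineBasis ι ℝ (ℝ × ℝ)) (hside : ∀ i, ∃ m ∈ L, ∀ j ≠ i, b j ∈ m.carrier)
    (hdisj : Disjoint (interior (convexHull ℝ (range b))) (linesUnion L)) :
    IsCell L (interior (convexHull ℝ (range b))) := by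
  have hq := b.centroid_mem_interior_convexHull
  refine ⟨_, hdisj.notMem_of_mem_left hq, (connectedComponentIn_compl_eq_of_frontier_subset
    isOpen_interior (convex_convexHull ℝ _).interior.isPreconnected hdisj ?_ hq).symm⟩
  refine frontier_interior_subset.trans ?_
  rw [((finite_range b).isClosed_convexHull ℝ).frontier_eq, b.interior_convexHull,
    b.convexHull_eq_nonneg_coord]
  rintro p ⟨hpT, hpI⟩
  obtain ⟨i, hi⟩ : ∃ i, b.coord i p ≤ 0 := by simpa using hpI
  obtain ⟨m, hm, hmi⟩ := hside i
  simp only [linesUnion, mem_iUnion]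
  refine ⟨m, hm, Line2.eval_eq_zero_iff.mp ?_⟩
  rw [b.apply_eq_coord_mul_s7 m.eval fun j hj => Line2.eval_eq_zero_iff.mpr (hmi j hj),
    le_antisymm hi (hpT i), zero_mul]

theorem AffineBasis.isTriangleSet_convexHull (b : AffineBasis (Fin 3) ℝ (ℝ × ℝ)) :
    IsTriangleSet (convexHull ℝ (range b)) := by
  have hrange : range b = {b 0, b 1, b 2} := by
    ext
    simp [Fin.exists_fin_succ, eq_comm]
  exact ⟨b 0, b 1, b 2, hrange ▸ affineIndependent_iff_not_collinear.mp b.ind, by rw [hrange]⟩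

theorem IsSimpleArrangement.exists_affineBasis {L : Finset Line2} (hL : IsSimpleArrangement L)
    {ℓ ℓ₁ ℓ₂ : Line2} (hℓ : ℓ ∈ L) (h₁ : ℓ₁ ∈ L) (h₂ : ℓ₂ ∈ L) (hℓ₁ : ℓ₁ ≠ ℓ) (hℓ₂ : ℓ₂ ≠ ℓ)
    (h₁₂ : ℓ₁ ≠ ℓ₂) {v : ℝ × ℝ} (hv₁ : v ∈ ℓ₁.carrier) (hv₂ : v ∈ ℓ₂.carrier) :
    ∃ b : AffineBasis (Fin 3) ℝ (ℝ × ℝ), b 0 = v ∧ b 1 ∈ ℓ.carrier ∧ b 1 ∈ ℓ₁.carrier ∧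
      b 2 ∈ ℓ.carrier ∧ b 2 ∈ ℓ₂.carrier := by
  have hx := Line2.inter_mem_left (hL.1 ℓ hℓ ℓ₁ h₁ hℓ₁.symm)
  have hx₁ := Line2.inter_mem_right (hL.1 ℓ hℓ ℓ₁ h₁ hℓ₁.symm)
  have hy := Line2.inter_mem_left (hL.1 ℓ hℓ ℓ₂ h₂ hℓ₂.symm)
  have hy₂ := Line2.inter_mem_right (hL.1 ℓ hℓ ℓ₂ h₂ hℓ₂.symm)
  have hxy : ℓ.inter ℓ₁ ≠ ℓ.inter ℓ₂ := fun h => hL.eval_ne_zero hℓ h₁ h₂ hℓ₁.symm hℓ₂.symm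
    h₁₂ hx hx₁ (Line2.eval_eq_zero_iff.mpr (h ▸ hy₂))
  obtain ⟨b, hb⟩ := exists_affineBasis_of_not_collinear (by simp)
    (ℓ.eval.not_collinear_of_apply_ne_zero hxy (Line2.eval_eq_zero_iff.mpr hx)
      (Line2.eval_eq_zero_iff.mpr hy) (hL.eval_ne_zero h₁ h₂ hℓ h₁₂ hℓ₁ hℓ₂ hv₁ hv₂))
  refine ⟨b, ?_, ?_, ?_, ?_, ?_⟩ <;> simp [hb, hx, hx₁, hy, hy₂]

/-- In a simple arrangement of `n ≥ 3` lines, every line of the arrangement is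
adjacent to at least one triangular bounded cell. -/
theorem stmt7 (L : Finset Line2) (hL : IsSimpleArrangement L) (hn : 3 ≤ L.card) :
    ∀ ℓ ∈ L, ∃ C : Set (ℝ × ℝ), IsCell L C ∧ Bornology.IsBounded C ∧
      IsTriangleSet (closure C) ∧
      ∃ x y : ℝ × ℝ, x ≠ y ∧ segment ℝ x y ⊆ closure C ∧
        segment ℝ x y ⊆ ℓ.carrier := by
  classical
  intro ℓ hℓ
  have hE : (L.erase ℓ).Nontrivial := by
    rw [← Finset.one_lt_card_iff_nontrivial, Finset.card_erase_of_mem hℓ]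
    omega
  obtain ⟨ℓ₁, h₁, ℓ₂, h₂, h₁₂, v, hv₁, hv₂, hmin⟩ := Line2.exists_vertex_forall_le (L.erase ℓ)
    (fun m hm n hn => hL.1 m (Finset.mem_of_mem_erase hm) n (Finset.mem_of_mem_erase hn)) hE
    fun q => |ℓ.eval q|
  obtain ⟨hℓ₁, hL₁⟩ := Finset.mem_erase.mp h₁
  obtain ⟨hℓ₂, hL₂⟩ := Finset.mem_erase.mp h₂
  obtain ⟨b, rfl, hx, hx₁, hy, hy₂⟩ := hL.exists_affineBasis hℓ hL₁ hL₂ hℓ₁ hℓ₂ h₁₂ hv₁ hv₂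
  have hside : ∀ i, ∃ m ∈ L, ∀ j ≠ i, b j ∈ m.carrier := by
    intro i
    fin_cases i
    exacts [⟨ℓ, hℓ, by simp [Fin.forall_fin_succ, hx, hy]⟩,
      ⟨ℓ₂, hL₂, by simp [Fin.forall_fin_succ, hv₂, hy₂]⟩,
      ⟨ℓ₁, hL₁, by simp [Fin.forall_fin_succ, hv₁, hx₁]⟩]
  have hdisj := hL.disjoint_interior_convexHull_linesUnion hℓ h₁ h₂ h₁₂ b hv₁ hv₂ hx hx₁ hy hy₂
    hmin
  refine ⟨_, isCell_interior_convexHull b hside hdisj,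
    ((finite_range b).isCompact_convexHull ℝ).isBounded.subset interior_subset, ?_, b 1, b 2,
    b.ind.injective.ne (by decide), ?_, ℓ.convex_carrier.segment_subset hx hy⟩ <;>
    rw [b.closure_interior_convexHull]
  exacts [b.isTriangleSet_convexHull, segment_subset_convexHull (mem_range_self 1)
    (mem_range_self 2)]
end

section
/- Let a and c be two non-parallel directed lines in the real plane, and let ℓ₁, ..., ℓ_j be further lines, each crossing both a and c, such that all pairwise intersection points among the ℓ_i and their intersections with a and c lie in the closed region R₁ = a⁻ ∩ c⁻ (the intersection of the left half-planes of a and c). Suppose the ℓ_i are indexed by the order in which they cross a. If two of these lines ℓ_{i₁} and ℓ_{i₂} with i₁ < i₂ also cross c at points that are ordered along c's direction, then the order of their crossings with c agrees with the order of their crossings with a (i.e., ℓ_{i₁} crosses c before ℓ_{i₂}). -/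
/-!
Write `side d q` for the signed area spanned by the direction of `d` and `q - d.pt`, so that
`d.leftClosed q` is `0 ≤ side d q` and the zeros of `side d` are the points of `d`.
On a line `ℓ` through `A ∈ a` and `C ∈ c`, the functions `side a` and `side c` are affine and
vanish at `A` and `C` respectively, so at any point `v` of `ℓ`
`side a v / side a C + side c v / side c A = 1`.
Along `c` the value `side a` is affine in the parameter `s` with slope `D = a.dir × c.dir`, and
along `a` the value `side c` is affine in `t` with slope `-D`; `D ≠ 0` since `a` and `c` meet
without coinciding. In the region `R₁`, away from concurrences, all six quantities
`side a v, side c v, side a Cᵢ, side c Aᵢ` are positive, and comparing the relations for `ℓ₁`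
and `ℓ₂` at their common point `v` gives `0 < (t₂ - t₁) (s₂ - s₁) D²`.
-/

/-- A directed line in the real plane: a base point together with a nonzero
direction vector. -/
structure DLine where
  pt : ℝ × ℝ
  dir : ℝ × ℝ
  dir_ne : dir ≠ 0

/-- The set of points of a directed line. -/
def DLine.carrier (d : DLine) : Set (ℝ × ℝ) :=
  {q | ∃ t : ℝ, q = d.pt + t • d.dir}

/-- The closed left half-plane of a directed line (the closure of the open
half-plane to the left of the line). -/
def DLine.leftClosed (d : DLine) (q : ℝ × ℝ) : Prop :=
  0 ≤ d.dir.1 * (q.2 - d.pt.2) - d.dir.2 * (q.1 - d.pt.1)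

def planeCross (u w : ℝ × ℝ) : ℝ := u.1 * w.2 - u.2 * w.1

namespace DLine

def side (d : DLine) (q : ℝ × ℝ) : ℝ :=
  d.dir.1 * (q.2 - d.pt.2) - d.dir.2 * (q.1 - d.pt.1)

theorem side_add_smul (d : DLine) (p e : ℝ × ℝ) (t : ℝ) :
    d.side (p + t • e) = d.side p + t * planeCross d.dir e := by
  simp only [side, planeCross, Prod.fst_add, Prod.snd_add, Prod.smul_fst, Prod.smul_snd,
    smul_eq_mul]
  ring

theorem side_eq_zero_iff_mem (d : DLine) (q : ℝ × ℝ) : d.side q = 0 ↔ q ∈ d.carrier := by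
  constructor
  · intro h
    rw [side] at h
    have hn : d.dir.1 ^ 2 + d.dir.2 ^ 2 ≠ 0 := by
      intro h0
      have h₁ : d.dir.1 = 0 := by nlinarith [sq_nonneg d.dir.1, sq_nonneg d.dir.2]
      have h₂ : d.dir.2 = 0 := by nlinarith [sq_nonneg d.dir.1, sq_nonneg d.dir.2]
      exact d.dir_ne (Prod.ext h₁ h₂)
    refine ⟨((q.1 - d.pt.1) * d.dir.1 + (q.2 - d.pt.2) * d.dir.2) /
      (d.dir.1 ^ 2 + d.dir.2 ^ 2), Prod.ext ?_ ?_⟩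
    · show q.1 = d.pt.1 + _ * d.dir.1
      field_simp
      linear_combination (-d.dir.2) * h
    · show q.2 = d.pt.2 + _ * d.dir.2
      field_simp
      linear_combination d.dir.1 * h
  · rintro ⟨t, rfl⟩
    rw [side_add_smul]
    simp only [side, planeCross]
    ring

theorem leftClosed.side_pos {d : DLine} {q : ℝ × ℝ} (h : d.leftClosed q)
    (hq : q ∉ d.carrier) : 0 < d.side q :=
  lt_of_le_of_ne h fun h0 => hq ((side_eq_zero_iff_mem d q).mp h0.symm)

theorem planeCross_dir_ne_zero {a c : DLine} {O q : ℝ × ℝ} (hOa : O ∈ a.carrier)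
    (hOc : O ∈ c.carrier) (hqc : q ∈ c.carrier) (hqa : q ∉ a.carrier) :
    planeCross a.dir c.dir ≠ 0 := by
  intro hD
  obtain ⟨s₀, rfl⟩ := hOc
  obtain ⟨s, rfl⟩ := hqc
  rw [← side_eq_zero_iff_mem, side_add_smul, hD, mul_zero, add_zero] at hOa hqa
  exact hqa hOa

theorem side_mul_side_add_side_mul_side (a c ℓ : DLine) {A C v : ℝ × ℝ}
    (hA : A ∈ ℓ.carrier) (hC : C ∈ ℓ.carrier) (hv : v ∈ ℓ.carrier)
    (hAa : A ∈ a.carrier) (hCc : C ∈ c.carrier) :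
    a.side v * c.side A + c.side v * a.side C = a.side C * c.side A := by
  rw [← side_eq_zero_iff_mem] at hAa hCc
  obtain ⟨p, rfl⟩ := hA
  obtain ⟨q, rfl⟩ := hC
  obtain ⟨r, rfl⟩ := hv
  simp only [side_add_smul] at hAa hCc ⊢
  linear_combination (c.side ℓ.pt + r * planeCross c.dir ℓ.dir) * hAa +
    (r - p) * planeCross a.dir ℓ.dir * hCc

end DLine

theorem sub_mul_sub_pos_of_crossing_relations {P Q α₁ α₂ γ₁ γ₂ : ℝ} (hP : 0 < P) (hQ : 0 < Q)
    (hα₁ : 0 < α₁) (hα₂ : 0 < α₂) (hγ₁ : 0 < γ₁) (hγ₂ : 0 < γ₂) (hα : α₁ ≠ α₂)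
    (h₁ : P * α₁ + Q * γ₁ = γ₁ * α₁) (h₂ : P * α₂ + Q * γ₂ = γ₂ * α₂) :
    0 < (α₁ - α₂) * (γ₂ - γ₁) := by
  have key : (α₁ - α₂) * (γ₂ - γ₁) * (P * α₁ * α₂) = (α₁ - α₂) ^ 2 * (Q * γ₁ * γ₂) := by
    linear_combination (α₁ - α₂) * (γ₂ * α₂ * h₁ - γ₁ * α₁ * h₂)
  have hpos : 0 < (α₁ - α₂) ^ 2 * (Q * γ₁ * γ₂) := by
    have := sub_ne_zero.mpr hα
    positivity
  exact pos_of_mul_pos_left (key ▸ hpos) (by positivity)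

theorem stmt14_general (a c ℓ₁ ℓ₂ : DLine)
    (hac : ∃ O : ℝ × ℝ, O ∈ a.carrier ∧ O ∈ c.carrier)
    (t₁ t₂ s₁ s₂ : ℝ) (v : ℝ × ℝ)
    -- crossings with `a` and `c`
    (ha₁ : a.pt + t₁ • a.dir ∈ ℓ₁.carrier) (ha₂ : a.pt + t₂ • a.dir ∈ ℓ₂.carrier)
    (hc₁ : c.pt + s₁ • c.dir ∈ ℓ₁.carrier) (hc₂ : c.pt + s₂ • c.dir ∈ ℓ₂.carrier)
    -- the crossing of `ℓ₁` and `ℓ₂`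
    (hv : v ∈ ℓ₁.carrier ∧ v ∈ ℓ₂.carrier)
    -- all these crossings lie in the closed region `R₁ = a⁻ ∩ c⁻`
    (hvR : a.leftClosed v ∧ c.leftClosed v)
    (haR : c.leftClosed (a.pt + t₁ • a.dir) ∧ c.leftClosed (a.pt + t₂ • a.dir))
    (hcR : a.leftClosed (c.pt + s₁ • c.dir) ∧ a.leftClosed (c.pt + s₂ • c.dir))
    -- no three of the four lines are concurrent (simplicity)
    (hv_not : v ∉ a.carrier ∧ v ∉ c.carrier)
    (ha_not : a.pt + t₁ • a.dir ∉ c.carrier ∧ a.pt + t₂ • a.dir ∉ c.carrier)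
    (hc_not : c.pt + s₁ • c.dir ∉ a.carrier ∧ c.pt + s₂ • c.dir ∉ a.carrier)
    (hlt : t₁ < t₂) :
    s₁ < s₂ := by
  obtain ⟨O, hOa, hOc⟩ := hac
  have hD : planeCross a.dir c.dir ≠ 0 :=
    DLine.planeCross_dir_ne_zero hOa hOc ⟨s₁, rfl⟩ hc_not.1
  have hα : ∀ t, c.side (a.pt + t • a.dir) = c.side a.pt - t * planeCross a.dir c.dir := by
    intro t; rw [DLine.side_add_smul, planeCross, planeCross]; ring
  have hγ : ∀ s, a.side (c.pt + s • c.dir) = a.side c.pt + s * planeCross a.dir c.dir :=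
    fun s => a.side_add_smul _ _ s
  have hA_ne : c.side (a.pt + t₁ • a.dir) ≠ c.side (a.pt + t₂ • a.dir) := by
    rw [hα, hα]
    intro h
    have : (t₂ - t₁) * planeCross a.dir c.dir = 0 := by linarith
    exact hD ((mul_eq_zero.mp this).resolve_left (sub_ne_zero.mpr hlt.ne'))
  have hpos := sub_mul_sub_pos_of_crossing_relations (hvR.1.side_pos hv_not.1)
    (hvR.2.side_pos hv_not.2) (haR.1.side_pos ha_not.1) (haR.2.side_pos ha_not.2)
    (hcR.1.side_pos hc_not.1) (hcR.2.side_pos hc_not.2) hA_ne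
    (DLine.side_mul_side_add_side_mul_side a c ℓ₁ ha₁ hc₁ hv.1 ⟨t₁, rfl⟩ ⟨s₁, rfl⟩)
    (DLine.side_mul_side_add_side_mul_side a c ℓ₂ ha₂ hc₂ hv.2 ⟨t₂, rfl⟩ ⟨s₂, rfl⟩)
  rw [hα, hα, hγ, hγ] at hpos
  have : 0 < (s₂ - s₁) * ((t₂ - t₁) * planeCross a.dir c.dir ^ 2) := by
    convert hpos using 1
    ring
  exact sub_pos.mp (pos_of_mul_pos_left this (by positivity))

/-- Let `a` and `c` be two non-parallel directed lines and `ℓ₁, ℓ₂` two further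
lines, each crossing both `a` and `c`, such that the crossing of `ℓ₁` with `ℓ₂`
and all their crossings with `a` and `c` lie in the closed region
`R₁ = a⁻ ∩ c⁻` (intersection of the closed left half-planes), and no three of
the lines `a, c, ℓ₁, ℓ₂` pass through a common point.  If `ℓ₁` crosses `a`
before `ℓ₂` (in the direction of `a`), then `ℓ₁` also crosses `c` before `ℓ₂`
(in the direction of `c`). -/
theorem stmt14 (a c ℓ₁ ℓ₂ : DLine)
    (hac : ∃ O : ℝ × ℝ, O ∈ a.carrier ∧ O ∈ c.carrier)
    (hne : ℓ₁.carrier ≠ ℓ₂.carrier)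
    (hna : ℓ₁.carrier ≠ a.carrier ∧ ℓ₂.carrier ≠ a.carrier)
    (hnc : ℓ₁.carrier ≠ c.carrier ∧ ℓ₂.carrier ≠ c.carrier)
    (t₁ t₂ s₁ s₂ : ℝ) (v : ℝ × ℝ)
    -- crossings with `a` and `c`
    (ha₁ : a.pt + t₁ • a.dir ∈ ℓ₁.carrier) (ha₂ : a.pt + t₂ • a.dir ∈ ℓ₂.carrier)
    (hc₁ : c.pt + s₁ • c.dir ∈ ℓ₁.carrier) (hc₂ : c.pt + s₂ • c.dir ∈ ℓ₂.carrier)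
    -- the crossing of `ℓ₁` and `ℓ₂`
    (hv : v ∈ ℓ₁.carrier ∧ v ∈ ℓ₂.carrier)
    -- all these crossings lie in the closed region `R₁ = a⁻ ∩ c⁻`
    (hvR : a.leftClosed v ∧ c.leftClosed v)
    (haR : c.leftClosed (a.pt + t₁ • a.dir) ∧ c.leftClosed (a.pt + t₂ • a.dir))
    (hcR : a.leftClosed (c.pt + s₁ • c.dir) ∧ a.leftClosed (c.pt + s₂ • c.dir))
    -- no three of the four lines are concurrent (simplicity)
    (hv_not : v ∉ a.carrier ∧ v ∉ c.carrier)
    (ha_not : a.pt + t₁ • a.dir ∉ c.carrier ∧ a.pt + t₂ • a.dir ∉ c.carrier)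
    (hc_not : c.pt + s₁ • c.dir ∉ a.carrier ∧ c.pt + s₂ • c.dir ∉ a.carrier)
    (hlt : t₁ < t₂) :
    s₁ < s₂ :=
  stmt14_general a c ℓ₁ ℓ₂ hac t₁ t₂ s₁ s₂ v ha₁ ha₂ hc₁ hc₂ hv hvR haR hcR hv_not ha_not hc_not hlt
end
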